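/- Fix k > 0 and ℓ > 0 and consider f(x) = k log σ(x) + ℓ log σ(−x) for x ∈ ℝ, where σ is the sigmoid. Then f is strictly concave, attains its unique maximum at x* = log(k/ℓ), and f'(x) = k σ(−x) − ℓ σ(x). -/

import Mathlib

/-!
Since `(log σ)' = 1 - σ = σ(-·)`, the derivative of `f` is `k σ(-x) - ℓ σ(x)`, which is strictly
decreasing because `σ` is strictly increasing; hence `f` is strictly concave. Writing
`σ(-x) = σ(x) e^{-x}`, the derivative vanishes exactly where `k e^{-x} = ℓ`, i.e. at `x = log (k/ℓ)`,
and a stationary point of a strictly concave function is its unique maximum.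
-/

open Real Set

lemma ConcaveOn.isMaxOn_of_hasDerivAt_eq_zero {S : Set ℝ} {f : ℝ → ℝ} {x : ℝ}
    (hf : ConcaveOn ℝ S f) (hx : x ∈ interior S) (hfx : HasDerivAt f 0 x) : IsMaxOn f S x := by
  have hrd : derivWithin (-f) (Ioi x) x = 0 := by
    simpa using hfx.neg.hasDerivWithinAt.derivWithin (uniqueDiffWithinAt_Ioi x)
  intro y hy
  simpa using hf.neg.isMinOn_of_rightDeriv_eq_zero hx hrd hy

lemma StrictConcaveOn.lt_of_isMaxOn {S : Set ℝ} {f : ℝ → ℝ} {x y : ℝ}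
    (hf : StrictConcaveOn ℝ S f) (hmax : IsMaxOn f S x) (hx : x ∈ S) (hy : y ∈ S) (hyx : y ≠ x) :
    f y < f x := by
  refine lt_of_le_of_ne (hmax hy) fun hfyx => hyx ?_
  refine hf.eq_of_isMaxOn (fun z hz => ?_) hmax hy hx
  exact hfyx ▸ hmax hz

namespace Real

lemma hasDerivAt_log_sigmoid (x : ℝ) : HasDerivAt (fun y => log (sigmoid y)) (sigmoid (-x)) x := by
  convert (hasDerivAt_sigmoid x).log (sigmoid_pos x).ne' using 1
  rw [sigmoid_neg, mul_div_cancel_left₀ _ (sigmoid_pos x).ne']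

lemma mul_sigmoid_neg_sub_mul_sigmoid (k l x : ℝ) :
    k * sigmoid (-x) - l * sigmoid x = sigmoid x * (k * exp (-x) - l) := by
  rw [← sigmoid_mul_rexp_neg]
  ring

/-- Skip-gram with negative sampling, for a single word-context pair. -/
noncomputable def sgnsObjective (k l x : ℝ) : ℝ := k * log (sigmoid x) + l * log (sigmoid (-x))

variable {k l : ℝ}

lemma hasDerivAt_sgnsObjective (x : ℝ) :
    HasDerivAt (sgnsObjective k l) (k * sigmoid (-x) - l * sigmoid x) x := by
  have hneg : HasDerivAt (fun y => log (sigmoid (-y))) (-sigmoid x) x := by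
    simpa [Function.comp_def] using (hasDerivAt_log_sigmoid (-x)).comp x (hasDerivAt_neg x)
  exact (((hasDerivAt_log_sigmoid x).const_mul k).add (hneg.const_mul l)).congr_deriv (by ring)

lemma strictAnti_deriv_sgnsObjective (hk : 0 < k) (hl : 0 < l) :
    StrictAnti (deriv (sgnsObjective k l)) := by
  intro x y hxy
  have hσ := sigmoid_strictMono hxy
  have hσneg := sigmoid_strictMono (neg_lt_neg hxy)
  simp only [(hasDerivAt_sgnsObjective _).deriv]
  nlinarith

lemma strictConcaveOn_sgnsObjective (hk : 0 < k) (hl : 0 < l) :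
    StrictConcaveOn ℝ univ (sgnsObjective k l) :=
  (strictAnti_deriv_sgnsObjective hk hl).strictConcaveOn_univ_of_deriv
    (Differentiable.continuous fun x => (hasDerivAt_sgnsObjective x).differentiableAt)

lemma hasDerivAt_sgnsObjective_log_div (hk : 0 < k) (hl : 0 < l) :
    HasDerivAt (sgnsObjective k l) 0 (log (k / l)) := by
  convert hasDerivAt_sgnsObjective (log (k / l)) using 1
  rw [mul_sigmoid_neg_sub_mul_sigmoid, exp_neg, exp_log (div_pos hk hl)]
  field_simp
  ring

lemma isMaxOn_sgnsObjective_log_div (hk : 0 < k) (hl : 0 < l) :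
    IsMaxOn (sgnsObjective k l) univ (log (k / l)) :=
  (strictConcaveOn_sgnsObjective hk hl).concaveOn.isMaxOn_of_hasDerivAt_eq_zero (by simp)
    (hasDerivAt_sgnsObjective_log_div hk hl)

end Real

/-- For k, ℓ > 0, the SGNS pointwise objective f(x) = k log σ(x) + ℓ log σ(−x)
(with σ the sigmoid) is strictly concave, has derivative
f'(x) = k σ(−x) − ℓ σ(x), and attains its unique maximum at x* = log(k/ℓ). -/
theorem stmt19 (k l : ℝ) (hk : 0 < k) (hl : 0 < l)
    (sig : ℝ → ℝ) (hsig : ∀ x, sig x = 1 / (1 + Real.exp (-x)))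
    (f : ℝ → ℝ)
    (hf : ∀ x, f x = k * Real.log (sig x) + l * Real.log (sig (-x))) :
    StrictConcaveOn ℝ Set.univ f ∧
    (∀ x, deriv f x = k * sig (-x) - l * sig x) ∧
    IsMaxOn f Set.univ (Real.log (k / l)) ∧
    (∀ x, x ≠ Real.log (k / l) → f x < f (Real.log (k / l))) := by
  obtain rfl : sig = sigmoid := funext fun x => by rw [hsig, one_div, sigmoid_def]
  obtain rfl : f = sgnsObjective k l := funext hf
  have hconc := strictConcaveOn_sgnsObjective hk hl
  have hmax := isMaxOn_sgnsObjective_log_div hk hl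
  exact ⟨hconc, fun x => (hasDerivAt_sgnsObjective x).deriv, hmax,
    fun x hx => hconc.lt_of_isMaxOn hmax (mem_univ _) (mem_univ x) hx⟩
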